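/- Preservation of typing under index substitution: if ζ is a sort-preserving substitution from index context Θ' to Θ and a linear term t has type A at time τ in contexts (Θ; Γ; Δ), then ζ(t) has type ζ(A) at time ζ(τ) in contexts (Θ'; ζ(Γ); ζ(Δ)). -/

import Mathlib

/-! STATEMENT 18: preservation of typing under index substitution for the
calculus `λ_W`. We formalise the index layer (sorts `Id` and `Time`), the
cartesian and linear types and terms (in de Bruijn style; linear variables
are positional, with explicit context splitting), the three typing
judgments, and the action of index substitutions, and state that typing is
preserved under sort-preserving index substitution. -/

/-- Index sorts: identifiers and timesteps. -/
inductive ISort : Type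
  | id
  | time
deriving DecidableEq

/-- Index terms: variables (de Bruijn), time literals, identifier literals. -/
inductive Ix : Type
  | var (n : ℕ)
  | timeLit (t : ℕ)
  | idLit (ι : ℕ)

/-- Index contexts. -/
abbrev ICtx := List ISort

/-- The index typing judgment `Θ ⊢ᵢ s : σ`. -/
inductive IxTy : ICtx → Ix → ISort → Prop
  | var {Θ n σ} : Θ[n]? = some σ → IxTy Θ (.var n) σ
  | time {Θ t} : IxTy Θ (.timeLit t) .time
  | id {Θ ι} : IxTy Θ (.idLit ι) .id

/-- The time literal `0` (the current timestep). -/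
def zero : Ix := .timeLit 0

mutual
/-- Cartesian (non-linear) types. -/
inductive CTy : Type
  | unit
  | arr (X Y : CTy)
  | G (A : LTy)

/-- Linear types. -/
inductive LTy : Type
  | I
  | tensor (A B : LTy)
  | lolli (A B : LTy)
  | evt (A : LTy)                -- ◇A
  | at_ (A : LTy) (τ : Ix)       -- A @ τ
  | F (X : CTy)
  | widget (i : Ix)
  | prefix_ (i τ : Ix)
  | all (σ : ISort) (A : LTy)    -- ∀(i:σ).A, binds an index variable
  | ex (σ : ISort) (A : LTy)     -- ∃(i:σ).A, binds an index variable
end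

/-- Renaming of index variables in an index term. -/
def renIx (ρ : ℕ → ℕ) : Ix → Ix
  | .var n => .var (ρ n)
  | .timeLit t => .timeLit t
  | .idLit ι => .idLit ι

/-- Lifting a renaming under an index binder. -/
def liftRen (ρ : ℕ → ℕ) : ℕ → ℕ
  | 0 => 0
  | n + 1 => ρ n + 1

mutual
/-- Renaming of index variables in a cartesian type. -/
def renCTy (ρ : ℕ → ℕ) : CTy → CTy
  | .unit => .unit
  | .arr X Y => .arr (renCTy ρ X) (renCTy ρ Y)
  | .G A => .G (renLTy ρ A)

/-- Renaming of index variables in a linear type. -/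
def renLTy (ρ : ℕ → ℕ) : LTy → LTy
  | .I => .I
  | .tensor A B => .tensor (renLTy ρ A) (renLTy ρ B)
  | .lolli A B => .lolli (renLTy ρ A) (renLTy ρ B)
  | .evt A => .evt (renLTy ρ A)
  | .at_ A τ => .at_ (renLTy ρ A) (renIx ρ τ)
  | .F X => .F (renCTy ρ X)
  | .widget i => .widget (renIx ρ i)
  | .prefix_ i τ => .prefix_ (renIx ρ i) (renIx ρ τ)
  | .all σ A => .all σ (renLTy (liftRen ρ) A)
  | .ex σ A => .ex σ (renLTy (liftRen ρ) A)
end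

/-- An index substitution: an index term for every index variable. -/
def ISub := ℕ → Ix

/-- Applying an index substitution to an index term. -/
def subIx (ζ : ISub) : Ix → Ix
  | .var n => ζ n
  | .timeLit t => .timeLit t
  | .idLit ι => .idLit ι

/-- Lifting an index substitution under an index binder. -/
def liftSub (ζ : ISub) : ISub
  | 0 => .var 0
  | n + 1 => renIx Nat.succ (ζ n)

/-- The substitution replacing index variable `0` by `s`. -/
def sub0 (s : Ix) : ISub
  | 0 => s
  | n + 1 => .var n

mutual
/-- Applying an index substitution to a cartesian type. -/
def subCTy (ζ : ISub) : CTy → CTy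
  | .unit => .unit
  | .arr X Y => .arr (subCTy ζ X) (subCTy ζ Y)
  | .G A => .G (subLTy ζ A)

/-- Applying an index substitution to a linear type. -/
def subLTy (ζ : ISub) : LTy → LTy
  | .I => .I
  | .tensor A B => .tensor (subLTy ζ A) (subLTy ζ B)
  | .lolli A B => .lolli (subLTy ζ A) (subLTy ζ B)
  | .evt A => .evt (subLTy ζ A)
  | .at_ A τ => .at_ (subLTy ζ A) (subIx ζ τ)
  | .F X => .F (subCTy ζ X)
  | .widget i => .widget (subIx ζ i)
  | .prefix_ i τ => .prefix_ (subIx ζ i) (subIx ζ τ)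
  | .all σ A => .all σ (subLTy (liftSub ζ) A)
  | .ex σ A => .ex σ (subLTy (liftSub ζ) A)
end

mutual
/-- Cartesian terms. -/
inductive CTm : Type
  | star
  | cvar (n : ℕ)
  | clam (e : CTm)
  | capp (e₁ e₂ : CTm)
  | Gbox (t : LTm)

/-- Linear terms (linear variables are positional). -/
inductive LTm : Type
  | var
  | lam (t : LTm)
  | app (t u : LTm)
  | unit
  | letUnit (t u : LTm)
  | pair (t u : LTm)
  | letPair (t u : LTm)
  | evt (t : LTm)
  | letEvt (t u : LTm)
  | atIntro (t : LTm) (τ : Ix)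
  | letAt (τ : Ix) (t u : LTm)
  | runG (e : CTm)
  | Fbox (e : CTm)
  | letF (t : LTm) (u : LTm)
  | allIntro (σ : ISort) (t : LTm)
  | allElim (t : LTm) (s : Ix)
  | exIntro (s : Ix) (t : LTm)
  | letEx (σ : ISort) (t u : LTm)
  | select (t₁ t₂ t₁' t₂' : LTm)
  | letUnitAt (τ : Ix) (t u : LTm)
  | letPairAt (τ : Ix) (t u : LTm)
end

mutual
/-- Applying an index substitution to a cartesian term. -/
def subCTm (ζ : ISub) : CTm → CTm
  | .star => .star
  | .cvar n => .cvar n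
  | .clam e => .clam (subCTm ζ e)
  | .capp e₁ e₂ => .capp (subCTm ζ e₁) (subCTm ζ e₂)
  | .Gbox t => .Gbox (subLTm ζ t)

/-- Applying an index substitution to a linear term. -/
def subLTm (ζ : ISub) : LTm → LTm
  | .var => .var
  | .lam t => .lam (subLTm ζ t)
  | .app t u => .app (subLTm ζ t) (subLTm ζ u)
  | .unit => .unit
  | .letUnit t u => .letUnit (subLTm ζ t) (subLTm ζ u)
  | .pair t u => .pair (subLTm ζ t) (subLTm ζ u)
  | .letPair t u => .letPair (subLTm ζ t) (subLTm ζ u)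
  | .evt t => .evt (subLTm ζ t)
  | .letEvt t u => .letEvt (subLTm ζ t) (subLTm ζ u)
  | .atIntro t τ => .atIntro (subLTm ζ t) (subIx ζ τ)
  | .letAt τ t u => .letAt (subIx ζ τ) (subLTm ζ t) (subLTm ζ u)
  | .runG e => .runG (subCTm ζ e)
  | .Fbox e => .Fbox (subCTm ζ e)
  | .letF t u => .letF (subLTm ζ t) (subLTm ζ u)
  | .allIntro σ t => .allIntro σ (subLTm (liftSub ζ) t)
  | .allElim t s => .allElim (subLTm ζ t) (subIx ζ s)
  | .exIntro s t => .exIntro (subIx ζ s) (subLTm ζ t)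
  | .letEx σ t u => .letEx σ (subLTm ζ t) (subLTm (liftSub ζ) u)
  | .select t₁ t₂ t₁' t₂' =>
      .select (subLTm ζ t₁) (subLTm ζ t₂) (subLTm ζ t₁') (subLTm ζ t₂')
  | .letUnitAt τ t u => .letUnitAt (subIx ζ τ) (subLTm ζ t) (subLTm ζ u)
  | .letPairAt τ t u => .letPairAt (subIx ζ τ) (subLTm ζ t) (subLTm ζ u)
end

/-- Cartesian contexts. -/
abbrev CCtx := List CTy

/-- Linear contexts: entries `a :_τ A` carry a time annotation. -/
abbrev LCtx := List (Ix × LTy)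

/-- Shift a cartesian context into an extended index context. -/
def shiftCCtx (Γ : CCtx) : CCtx := Γ.map (renCTy Nat.succ)

/-- Shift a linear context into an extended index context. -/
def shiftLCtx (Δ : LCtx) : LCtx :=
  Δ.map fun p => (renIx Nat.succ p.1, renLTy Nat.succ p.2)

mutual
/-- The cartesian typing judgment `Θ; Γ ⊢_c e : X`. -/
inductive CJ : ICtx → CCtx → CTm → CTy → Prop
  | star {Θ Γ} : CJ Θ Γ .star .unit
  | var {Θ Γ n X} : Γ[n]? = some X → CJ Θ Γ (.cvar n) X
  | lam {Θ Γ e X Y} : CJ Θ (X :: Γ) e Y → CJ Θ Γ (.clam e) (.arr X Y)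
  | app {Θ Γ e₁ e₂ X Y} :
      CJ Θ Γ e₁ (.arr X Y) → CJ Θ Γ e₂ X → CJ Θ Γ (.capp e₁ e₂) Y
  | Gintro {Θ Γ t A} : LJ Θ Γ [] t A zero → CJ Θ Γ (.Gbox t) (.G A)

/-- The linear typing judgment `Θ; Γ; Δ ⊢_l t :_τ A`
(`t` has type `A` at time `τ`). -/
inductive LJ : ICtx → CCtx → LCtx → LTm → LTy → Ix → Prop
  | var {Θ Γ A} : LJ Θ Γ [(zero, A)] .var A zero
  | lam {Θ Γ Δ t A B} :
      LJ Θ Γ (Δ ++ [(zero, A)]) t B zero →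
      LJ Θ Γ Δ (.lam t) (.lolli A B) zero
  | app {Θ Γ Δ₁ Δ₂ t u A B} :
      LJ Θ Γ Δ₁ t (.lolli A B) zero → LJ Θ Γ Δ₂ u A zero →
      LJ Θ Γ (Δ₁ ++ Δ₂) (.app t u) B zero
  | unit {Θ Γ} : LJ Θ Γ [] .unit .I zero
  | letUnit {Θ Γ Δ₁ Δ₂ t u C} :
      LJ Θ Γ Δ₁ t .I zero → LJ Θ Γ Δ₂ u C zero →
      LJ Θ Γ (Δ₁ ++ Δ₂) (.letUnit t u) C zero
  | pair {Θ Γ Δ₁ Δ₂ t u A B} :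
      LJ Θ Γ Δ₁ t A zero → LJ Θ Γ Δ₂ u B zero →
      LJ Θ Γ (Δ₁ ++ Δ₂) (.pair t u) (.tensor A B) zero
  | letPair {Θ Γ Δ₁ Δ₂ t u A B C} :
      LJ Θ Γ Δ₁ t (.tensor A B) zero →
      LJ Θ Γ (Δ₂ ++ [(zero, A), (zero, B)]) u C zero →
      LJ Θ Γ (Δ₁ ++ Δ₂) (.letPair t u) C zero
  | evtIntro {Θ Γ Δ t A} :
      LJ Θ Γ Δ t A zero → LJ Θ Γ Δ (.evt t) (.evt A) zero
  | letEvt {Θ Γ Δ t u A B} :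
      LJ Θ Γ Δ t (.evt A) zero → LJ Θ Γ [(zero, A)] u (.evt B) zero →
      LJ Θ Γ Δ (.letEvt t u) (.evt B) zero
  | atIntro {Θ Γ Δ t A τ} :
      IxTy Θ τ .time → LJ Θ Γ Δ t A τ →
      LJ Θ Γ Δ (.atIntro t τ) (.at_ A τ) zero
  | atElim {Θ Γ Δ₁ Δ₂ t u A B τ} :
      IxTy Θ τ .time → LJ Θ Γ Δ₁ t (.at_ A τ) zero →
      LJ Θ Γ (Δ₂ ++ [(τ, A)]) u B zero →
      LJ Θ Γ (Δ₁ ++ Δ₂) (.letAt τ t u) B zero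
  | runG {Θ Γ e A} : CJ Θ Γ e (.G A) → LJ Θ Γ [] (.runG e) A zero
  | Fintro {Θ Γ e X} : CJ Θ Γ e X → LJ Θ Γ [] (.Fbox e) (.F X) zero
  | Felim {Θ Γ Δ₁ Δ₂ t u X B} :
      LJ Θ Γ Δ₁ t (.F X) zero → LJ Θ (X :: Γ) Δ₂ u B zero →
      LJ Θ Γ (Δ₁ ++ Δ₂) (.letF t u) B zero
  | allIntro {Θ Γ Δ σ t A} :
      LJ (σ :: Θ) (shiftCCtx Γ) (shiftLCtx Δ) t A zero →
      LJ Θ Γ Δ (.allIntro σ t) (.all σ A) zero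
  | allElim {Θ Γ Δ σ t s A} :
      IxTy Θ s σ → LJ Θ Γ Δ t (.all σ A) zero →
      LJ Θ Γ Δ (.allElim t s) (subLTy (sub0 s) A) zero
  | exIntro {Θ Γ Δ σ s t A} :
      IxTy Θ s σ → LJ Θ Γ Δ t (subLTy (sub0 s) A) zero →
      LJ Θ Γ Δ (.exIntro s t) (.ex σ A) zero
  | exElim {Θ Γ Δ₁ Δ₂ σ t u A B} :
      LJ Θ Γ Δ₁ t (.ex σ A) zero →
      LJ (σ :: Θ) (shiftCCtx Γ) (shiftLCtx Δ₂ ++ [(zero, A)]) u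
        (renLTy Nat.succ B) zero →
      LJ Θ Γ (Δ₁ ++ Δ₂) (.letEx σ t u) B zero
  | select {Θ Γ Δ₁ Δ₂ t₁ t₂ t₁' t₂' A B C} :
      LJ Θ Γ Δ₁ t₁ (.evt A) zero → LJ Θ Γ Δ₂ t₂ (.evt B) zero →
      LJ Θ Γ [(zero, A), (zero, .evt B)] t₁' (.evt C) zero →
      LJ Θ Γ [(zero, B), (zero, .evt A)] t₂' (.evt C) zero →
      LJ Θ Γ (Δ₁ ++ Δ₂) (.select t₁ t₂ t₁' t₂') (.evt C) zero
  | delay {Θ Γ Δ t A τ} :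
      IxTy Θ τ .time → (∀ p ∈ Δ, p.1 = τ) →
      LJ Θ Γ (Δ.map fun p => (zero, p.2)) t A zero →
      LJ Θ Γ Δ t A τ
  | letUnitAt {Θ Γ Δ₁ Δ₂ t u B τ} :
      IxTy Θ τ .time → LJ Θ Γ Δ₁ t .I τ → LJ Θ Γ Δ₂ u B zero →
      LJ Θ Γ (Δ₁ ++ Δ₂) (.letUnitAt τ t u) B zero
  | letPairAt {Θ Γ Δ₁ Δ₂ t u A B C τ} :
      IxTy Θ τ .time → LJ Θ Γ Δ₁ t (.tensor A B) τ →
      LJ Θ Γ (Δ₂ ++ [(τ, A), (τ, B)]) u C zero →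
      LJ Θ Γ (Δ₁ ++ Δ₂) (.letPairAt τ t u) C zero
end

/-- `ζ` is a (sort-preserving) index substitution from `Θ'` to `Θ`:
it assigns to each variable of `Θ` a well-sorted index term over `Θ'`. -/
def SortPres (ζ : ISub) (Θ' Θ : ICtx) : Prop :=
  ∀ n σ, Θ[n]? = some σ → IxTy Θ' (ζ n) σ

/-- Action of an index substitution on a linear context. -/
def subLCtx (ζ : ISub) (Δ : LCtx) : LCtx :=
  Δ.map fun p => (subIx ζ p.1, subLTy ζ p.2)

/-! The typing rules touch index terms only through `Θ ⊢ᵢ s : σ`, through shifting under the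
binders of `∀`-introduction and `∃`-elimination, and through the instantiation `A[s/0]` of
`∀`-elimination and `∃`-introduction. A mutual induction on derivations therefore goes through
once we know that `ζ` (and its lift under a binder) sends well-sorted index terms to well-sorted
ones, that the lift of `ζ` commutes with shifting, and that `ζ(A[s/0]) = (ζ↑ A)[ζ s/0]`. The
last two follow from the fusion law `ζ (ξ A) = (ζ ∘ ξ) A`, reading renamings as substitutions
by variables. -/

def ISub.ofRen (ρ : ℕ → ℕ) : ISub := fun n => .var (ρ n)

def ISub.comp (ζ ξ : ISub) : ISub := fun n => subIx ζ (ξ n)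

theorem renIx_eq_subIx (ρ : ℕ → ℕ) (s : Ix) : renIx ρ s = subIx (.ofRen ρ) s := by
  cases s <;> rfl

theorem subIx_subIx (ζ ξ : ISub) (s : Ix) : subIx ζ (subIx ξ s) = subIx (ζ.comp ξ) s := by
  cases s <;> rfl

theorem subIx_liftSub_succ (ζ : ISub) (s : Ix) :
    subIx (liftSub ζ) (renIx Nat.succ s) = renIx Nat.succ (subIx ζ s) := by
  cases s <;> rfl

theorem liftSub_ofRen (ρ : ℕ → ℕ) : liftSub (.ofRen ρ) = .ofRen (liftRen ρ) := by
  funext n; cases n <;> rfl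

theorem liftSub_comp (ζ ξ : ISub) : liftSub (ζ.comp ξ) = (liftSub ζ).comp (liftSub ξ) := by
  funext n
  cases n with
  | zero => rfl
  | succ n => exact (subIx_liftSub_succ ζ (ξ n)).symm

mutual
theorem renCTy_eq_subCTy (ρ : ℕ → ℕ) : ∀ X, renCTy ρ X = subCTy (.ofRen ρ) X
  | .unit => rfl
  | .arr X Y => by simp only [renCTy, subCTy, renCTy_eq_subCTy]
  | .G A => by simp only [renCTy, subCTy, renLTy_eq_subLTy]

theorem renLTy_eq_subLTy (ρ : ℕ → ℕ) : ∀ A, renLTy ρ A = subLTy (.ofRen ρ) A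
  | .I => rfl
  | .tensor A B | .lolli A B => by simp only [renLTy, subLTy, renLTy_eq_subLTy]
  | .evt A => by simp only [renLTy, subLTy, renLTy_eq_subLTy]
  | .at_ A τ => by simp only [renLTy, subLTy, renLTy_eq_subLTy, renIx_eq_subIx]
  | .F X => by simp only [renLTy, subLTy, renCTy_eq_subCTy]
  | .widget i | .prefix_ i _ => by simp only [renLTy, subLTy, renIx_eq_subIx]
  | .all σ A | .ex σ A => by simp only [renLTy, subLTy, renLTy_eq_subLTy, liftSub_ofRen]
end

mutual
theorem subCTy_subCTy (ζ ξ : ISub) : ∀ X, subCTy ζ (subCTy ξ X) = subCTy (ζ.comp ξ) X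
  | .unit => rfl
  | .arr X Y => by simp only [subCTy, subCTy_subCTy]
  | .G A => by simp only [subCTy, subLTy_subLTy]

theorem subLTy_subLTy (ζ ξ : ISub) : ∀ A, subLTy ζ (subLTy ξ A) = subLTy (ζ.comp ξ) A
  | .I => rfl
  | .tensor A B | .lolli A B => by simp only [subLTy, subLTy_subLTy]
  | .evt A => by simp only [subLTy, subLTy_subLTy]
  | .at_ A τ => by simp only [subLTy, subLTy_subLTy, subIx_subIx]
  | .F X => by simp only [subLTy, subCTy_subCTy]
  | .widget i | .prefix_ i _ => by simp only [subLTy, subIx_subIx]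
  | .all σ A | .ex σ A => by simp only [subLTy, subLTy_subLTy, liftSub_comp]
end

theorem liftSub_comp_ofRen_succ (ζ : ISub) :
    (liftSub ζ).comp (.ofRen Nat.succ) = (ISub.ofRen Nat.succ).comp ζ := by
  funext n
  exact renIx_eq_subIx _ (ζ n)

theorem subCTy_liftSub_shift (ζ : ISub) (X : CTy) :
    subCTy (liftSub ζ) (renCTy Nat.succ X) = renCTy Nat.succ (subCTy ζ X) := by
  simp only [renCTy_eq_subCTy, subCTy_subCTy, liftSub_comp_ofRen_succ]

theorem subLTy_liftSub_shift (ζ : ISub) (A : LTy) :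
    subLTy (liftSub ζ) (renLTy Nat.succ A) = renLTy Nat.succ (subLTy ζ A) := by
  simp only [renLTy_eq_subLTy, subLTy_subLTy, liftSub_comp_ofRen_succ]

theorem comp_sub0 (ζ : ISub) (s : Ix) :
    ζ.comp (sub0 s) = (sub0 (subIx ζ s)).comp (liftSub ζ) := by
  funext n
  cases n with
  | zero => rfl
  | succ n =>
    show ζ n = subIx (sub0 (subIx ζ s)) (renIx Nat.succ (ζ n))
    cases ζ n <;> rfl

theorem subLTy_subLTy_sub0 (ζ : ISub) (s : Ix) (A : LTy) :
    subLTy ζ (subLTy (sub0 s) A) = subLTy (sub0 (subIx ζ s)) (subLTy (liftSub ζ) A) := by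
  simp only [subLTy_subLTy, comp_sub0]

theorem IxTy.shift {Θ : ICtx} {s : Ix} {σ : ISort} (σ₀ : ISort) :
    IxTy Θ s σ → IxTy (σ₀ :: Θ) (renIx Nat.succ s) σ
  | .var h => .var h
  | .time => .time
  | .id => .id

theorem IxTy.subst {ζ : ISub} {Θ' Θ : ICtx} {s : Ix} {σ : ISort} (hζ : SortPres ζ Θ' Θ) :
    IxTy Θ s σ → IxTy Θ' (subIx ζ s) σ
  | .var h => hζ _ _ h
  | .time => .time
  | .id => .id

theorem SortPres.liftSub {ζ : ISub} {Θ' Θ : ICtx} (hζ : SortPres ζ Θ' Θ) (σ₀ : ISort) :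
    SortPres (liftSub ζ) (σ₀ :: Θ') (σ₀ :: Θ)
  | 0, _, h => by cases h; exact .var rfl
  | n + 1, σ, h => (hζ n σ h).shift σ₀

theorem subLCtx_append (ζ : ISub) (Δ₁ Δ₂ : LCtx) :
    subLCtx ζ (Δ₁ ++ Δ₂) = subLCtx ζ Δ₁ ++ subLCtx ζ Δ₂ :=
  List.map_append

theorem map_subCTy_liftSub_shiftCCtx (ζ : ISub) (Γ : CCtx) :
    (shiftCCtx Γ).map (subCTy (liftSub ζ)) = shiftCCtx (Γ.map (subCTy ζ)) := by
  simp only [shiftCCtx, List.map_map, Function.comp_def, subCTy_liftSub_shift]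

theorem subLCtx_liftSub_shiftLCtx (ζ : ISub) (Δ : LCtx) :
    subLCtx (liftSub ζ) (shiftLCtx Δ) = shiftLCtx (subLCtx ζ Δ) := by
  simp only [subLCtx, shiftLCtx, List.map_map, Function.comp_def, subIx_liftSub_succ,
    subLTy_liftSub_shift]

theorem subLCtx_map_zero (ζ : ISub) (Δ : LCtx) :
    subLCtx ζ (Δ.map fun p => (zero, p.2)) = (subLCtx ζ Δ).map fun p => (zero, p.2) := by
  simp only [subLCtx, List.map_map, Function.comp_def]
  rfl

theorem forall_mem_subLCtx_fst {ζ : ISub} {Δ : LCtx} {τ : Ix} (hτ : ∀ p ∈ Δ, p.1 = τ) :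
    ∀ p ∈ subLCtx ζ Δ, p.1 = subIx ζ τ := by
  simp only [subLCtx, List.forall_mem_map]
  exact fun p hp => congrArg (subIx ζ) (hτ p hp)

mutual
theorem CJ.subst {ζ : ISub} {Θ' Θ : ICtx} (hζ : SortPres ζ Θ' Θ) {Γ : CCtx} {e : CTm}
    {X : CTy} : CJ Θ Γ e X → CJ Θ' (Γ.map (subCTy ζ)) (subCTm ζ e) (subCTy ζ X)
  | .star => .star
  | .var h => .var (by simp [h])
  | .lam h => .lam (h.subst hζ)
  | .app h₁ h₂ => .app (h₁.subst hζ) (h₂.subst hζ)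
  | .Gintro h => .Gintro (h.subst hζ)

theorem LJ.subst {ζ : ISub} {Θ' Θ : ICtx} (hζ : SortPres ζ Θ' Θ) {Γ : CCtx} {Δ : LCtx}
    {t : LTm} {A : LTy} {τ : Ix} : LJ Θ Γ Δ t A τ →
      LJ Θ' (Γ.map (subCTy ζ)) (subLCtx ζ Δ) (subLTm ζ t) (subLTy ζ A) (subIx ζ τ)
  | .var => .var
  | .lam h => .lam (by have := h.subst hζ; rwa [subLCtx_append] at this)
  | .app h₁ h₂ => subLCtx_append ζ _ _ ▸ .app (h₁.subst hζ) (h₂.subst hζ)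
  | .unit => .unit
  | .letUnit h₁ h₂ => subLCtx_append ζ _ _ ▸ .letUnit (h₁.subst hζ) (h₂.subst hζ)
  | .pair h₁ h₂ => subLCtx_append ζ _ _ ▸ .pair (h₁.subst hζ) (h₂.subst hζ)
  | .letPair h₁ h₂ =>
      subLCtx_append ζ _ _ ▸ LJ.letPair (h₁.subst hζ) <| by
        have := h₂.subst hζ; rwa [subLCtx_append] at this
  | .evtIntro h => .evtIntro (h.subst hζ)
  | .letEvt h₁ h₂ => .letEvt (h₁.subst hζ) (h₂.subst hζ)
  | .atIntro hτ h => .atIntro (hτ.subst hζ) (h.subst hζ)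
  | .atElim hτ h₁ h₂ =>
      subLCtx_append ζ _ _ ▸ LJ.atElim (hτ.subst hζ) (h₁.subst hζ) <| by
        have := h₂.subst hζ; rwa [subLCtx_append] at this
  | .runG h => .runG (h.subst hζ)
  | .Fintro h => .Fintro (h.subst hζ)
  | .Felim h₁ h₂ => subLCtx_append ζ _ _ ▸ .Felim (h₁.subst hζ) (h₂.subst hζ)
  | .allIntro (σ := σ) h => .allIntro <| by
      have := h.subst (hζ.liftSub σ)
      rwa [map_subCTy_liftSub_shiftCCtx, subLCtx_liftSub_shiftLCtx] at this
  | .allElim hs h => subLTy_subLTy_sub0 ζ _ _ ▸ .allElim (hs.subst hζ) (h.subst hζ)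
  | .exIntro hs h => .exIntro (hs.subst hζ) (subLTy_subLTy_sub0 ζ _ _ ▸ h.subst hζ)
  | .exElim (σ := σ) h₁ h₂ => subLCtx_append ζ _ _ ▸ LJ.exElim (h₁.subst hζ) <| by
      have := h₂.subst (hζ.liftSub σ)
      rwa [map_subCTy_liftSub_shiftCCtx, subLCtx_append, subLCtx_liftSub_shiftLCtx,
        subLTy_liftSub_shift] at this
  | .select h₁ h₂ h₁' h₂' =>
      subLCtx_append ζ _ _ ▸
        .select (h₁.subst hζ) (h₂.subst hζ) (h₁'.subst hζ) (h₂'.subst hζ)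
  | .delay hτ hΔ h =>
      .delay (hτ.subst hζ) (forall_mem_subLCtx_fst hΔ) (subLCtx_map_zero ζ _ ▸ h.subst hζ)
  | .letUnitAt hτ h₁ h₂ =>
      subLCtx_append ζ _ _ ▸ .letUnitAt (hτ.subst hζ) (h₁.subst hζ) (h₂.subst hζ)
  | .letPairAt hτ h₁ h₂ =>
      subLCtx_append ζ _ _ ▸ LJ.letPairAt (hτ.subst hζ) (h₁.subst hζ) <| by
        have := h₂.subst hζ; rwa [subLCtx_append] at this
end

/-- preservation of typing under index substitution. If
`ζ : Θ' → Θ` is sort-preserving and `Θ; Γ; Δ ⊢ t :_τ A`, then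
`Θ'; ζ(Γ); ζ(Δ) ⊢ ζ(t) :_{ζ(τ)} ζ(A)` (and similarly for the cartesian
judgment). -/
theorem index_substitution_preserves_typing
    (ζ : ISub) (Θ' Θ : ICtx) (hζ : SortPres ζ Θ' Θ) :
    (∀ (Γ : CCtx) (e : CTm) (X : CTy),
      CJ Θ Γ e X → CJ Θ' (Γ.map (subCTy ζ)) (subCTm ζ e) (subCTy ζ X))
    ∧ (∀ (Γ : CCtx) (Δ : LCtx) (t : LTm) (A : LTy) (τ : Ix),
      LJ Θ Γ Δ t A τ →
        LJ Θ' (Γ.map (subCTy ζ)) (subLCtx ζ Δ) (subLTm ζ t)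
          (subLTy ζ A) (subIx ζ τ)) :=
  ⟨fun _ _ _ h => h.subst hζ, fun _ _ _ _ _ h => h.subst hζ⟩
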